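/- (Lemma 1.) Let w1, w2, w3 > 0. For every λ with 0 < λ ≤ 2 there exists h0 > 0 such that for all h ∈ (0, h0), the spectral radius of the matrix Q(h,λ) is strictly less than 1. -/

import Mathlib

noncomputable def Sh (w1 w2 w3 h : ℝ) : ℝ := w3 + w2 * h ^ 2 + w1 * h ^ 4 / 4

noncomputable def ah (w1 w2 w3 h : ℝ) : ℝ := w1 * h ^ 2 / (2 * Sh w1 w2 w3 h)

noncomputable def bh (w1 w2 w3 h : ℝ) : ℝ := (w2 * h + w1 * h ^ 3 / 2) / Sh w1 w2 w3 h

noncomputable def Q (w1 w2 w3 h lam : ℝ) : Matrix (Fin 2) (Fin 2) ℝ :=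
  !![1 - h ^ 2 / 2 * ah w1 w2 w3 h * lam, h - h ^ 2 / 2 * bh w1 w2 w3 h;
     -(h * ah w1 w2 w3 h * lam), 1 - h * bh w1 w2 w3 h]

/-- The matrix `Q` viewed as a complex matrix. -/
noncomputable def Qc (w1 w2 w3 h lam : ℝ) : Matrix (Fin 2) (Fin 2) ℂ :=
  (Q w1 w2 w3 h lam).map (fun x => (x : ℂ))

/-! Jury's criterion: the eigenvalues of a real 2 × 2 matrix with trace `t` and determinant `d`
lie in the open unit disc as soon as `1 - t + d > 0`, `1 + t + d > 0` and `d < 1`. For `Q(h, λ)`,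
writing `X = h²·aʰ·λ/2` and `Y = h·bʰ`, one has `t = 2 - X - Y` and `d = 1 + X - Y`, so these
conditions read `0 < X < Y < 2`; they hold for every `h > 0` because `λ ∈ (0, 2]` and the weights
are positive. -/

theorem spectralRadius_lt_of_finite {𝕜 A : Type*} [NormedField 𝕜] [Ring A] [Algebra 𝕜 A]
    {a : A} {r : ENNReal} (hr : 0 < r) (hfin : (spectrum 𝕜 a).Finite)
    (h : ∀ k ∈ spectrum 𝕜 a, (‖k‖₊ : ENNReal) < r) : spectralRadius 𝕜 a < r := by
  lift spectrum 𝕜 a to Finset 𝕜 using hfin with s hs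
  rw [spectralRadius, ← hs]
  simpa only [Finset.mem_coe, ← Finset.sup_eq_iSup] using (Finset.sup_lt_iff hr).2 h

theorem Matrix.sq_sub_trace_mul_add_det_eq_zero_of_mem_spectrum {K : Type*} [Field K]
    {A : Matrix (Fin 2) (Fin 2) K} {k : K} (hk : k ∈ spectrum K A) :
    k ^ 2 - A.trace * k + A.det = 0 := by
  simpa [mem_spectrum_iff_isRoot_charpoly, charpoly_fin_two] using hk

theorem abs_lt_one_of_sq_sub_mul_add_eq_zero {t d x : ℝ} (h1 : 0 < 1 - t + d)
    (h2 : 0 < 1 + t + d) (hd : d < 1) (hx : x ^ 2 - t * x + d = 0) : |x| < 1 := by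
  -- `x ^ 2 - t * x + d = (x ∓ 1) * (x ± 1 - t) + (1 ∓ t + d)`
  rw [abs_lt]
  constructor
  · by_contra! hle
    nlinarith [mul_nonneg (by linarith : (0:ℝ) ≤ -1 - x) (by linarith : (0:ℝ) ≤ 1 + t - x)]
  · by_contra! hle
    nlinarith [mul_nonneg (by linarith : (0:ℝ) ≤ x - 1) (by linarith : (0:ℝ) ≤ x + 1 - t)]

theorem Complex.norm_lt_one_of_sq_sub_mul_add_eq_zero {t d : ℝ} (h1 : 0 < 1 - t + d)
    (h2 : 0 < 1 + t + d) (hd : d < 1) {μ : ℂ} (hμ : μ ^ 2 - t * μ + d = 0) : ‖μ‖ < 1 := by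
  have hre : μ.re ^ 2 - μ.im ^ 2 - t * μ.re + d = 0 := by
    simpa [sq] using congrArg Complex.re hμ
  have him : μ.im * (2 * μ.re - t) = 0 := by
    have := congrArg Complex.im hμ
    simp only [sq, sub_im, add_im, mul_im, ofReal_re, ofReal_im, zero_im] at this
    linear_combination this
  rcases mul_eq_zero.1 him with hreal | hpair
  · rw [← re_add_im μ, hreal, ofReal_zero, zero_mul, add_zero, norm_real, Real.norm_eq_abs]
    exact abs_lt_one_of_sq_sub_mul_add_eq_zero h1 h2 hd (by rw [hreal] at hre; linarith)
  · rw [← sq_lt_one_iff₀ (norm_nonneg μ), Complex.sq_norm, normSq_apply]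
    nlinarith

theorem Matrix.spectralRadius_map_ofReal_lt_one (A : Matrix (Fin 2) (Fin 2) ℝ)
    (h1 : 0 < 1 - A.trace + A.det) (h2 : 0 < 1 + A.trace + A.det) (hd : A.det < 1) :
    spectralRadius ℂ (A.map Complex.ofReal) < 1 := by
  refine spectralRadius_lt_of_finite one_pos (finite_spectrum _) fun k hk => ?_
  have hroot := sq_sub_trace_mul_add_det_eq_zero_of_mem_spectrum hk
  have htrace : (A.map Complex.ofReal).trace = A.trace := by simp [trace_fin_two]
  have hdet : (A.map Complex.ofReal).det = A.det := by simp [det_fin_two]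
  rw [htrace, hdet] at hroot
  rw [ENNReal.coe_lt_one_iff, ← NNReal.coe_lt_one, coe_nnnorm]
  exact Complex.norm_lt_one_of_sq_sub_mul_add_eq_zero h1 h2 hd hroot

section

variable {w1 w2 w3 : ℝ}

theorem Sh_pos (hw1 : 0 ≤ w1) (hw2 : 0 ≤ w2) (hw3 : 0 < w3) (h : ℝ) : 0 < Sh w1 w2 w3 h := by
  unfold Sh
  positivity

theorem ah_pos (hw1 : 0 < w1) {h : ℝ} (hS : 0 < Sh w1 w2 w3 h) (hh : h ≠ 0) :
    0 < ah w1 w2 w3 h := by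
  unfold ah
  positivity

theorem mul_bh_lt_two (hw1 : 0 ≤ w1) (hw2 : 0 ≤ w2) (hw3 : 0 < w3) (h : ℝ) :
    h * bh w1 w2 w3 h < 2 := by
  have hS := Sh_pos hw1 hw2 hw3 h
  rw [bh, mul_div_assoc', div_lt_iff₀ hS, Sh]
  nlinarith [mul_nonneg hw2 (sq_nonneg h)]

theorem sq_div_two_mul_ah_mul_lt_mul_bh (hw1 : 0 ≤ w1) (hw2 : 0 < w2) {h lam : ℝ}
    (hS : 0 < Sh w1 w2 w3 h) (hh : h ≠ 0) (hlam : lam ≤ 2) :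
    h ^ 2 / 2 * ah w1 w2 w3 h * lam < h * bh w1 w2 w3 h := by
  have hX : h ^ 2 / 2 * ah w1 w2 w3 h * lam = w1 * h ^ 4 * lam / 4 / Sh w1 w2 w3 h := by
    rw [ah]
    field_simp
    ring
  rw [hX, bh, mul_div_assoc', div_lt_div_iff_of_pos_right hS]
  have hw2h : 0 < w2 * h ^ 2 := by positivity
  have hw1h : 0 ≤ w1 * h ^ 4 * (2 - lam) := by
    have := sub_nonneg.2 hlam
    positivity
  linarith

theorem Q_trace (w1 w2 w3 h lam : ℝ) :
    (Q w1 w2 w3 h lam).trace = 2 - h ^ 2 / 2 * ah w1 w2 w3 h * lam - h * bh w1 w2 w3 h := by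
  rw [Q, Matrix.trace_fin_two_of]
  ring

theorem Q_det (w1 w2 w3 h lam : ℝ) :
    (Q w1 w2 w3 h lam).det = 1 + h ^ 2 / 2 * ah w1 w2 w3 h * lam - h * bh w1 w2 w3 h := by
  rw [Q, Matrix.det_fin_two_of]
  ring

end

theorem spectral_radius_lt_one (w1 w2 w3 : ℝ) (hw1 : 0 < w1) (hw2 : 0 < w2)
    (hw3 : 0 < w3) :
    ∀ lam : ℝ, 0 < lam → lam ≤ 2 →
      ∃ h0 > 0, ∀ h : ℝ, 0 < h → h < h0 →
        spectralRadius ℂ (Qc w1 w2 w3 h lam) < 1 := by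
  intro lam hlam0 hlam2
  -- The estimates below hold for every `h > 0`, so any `h0` will do.
  refine ⟨1, one_pos, fun h hh _ => ?_⟩
  have hS := Sh_pos hw1.le hw2.le hw3 h
  have hX : 0 < h ^ 2 / 2 * ah w1 w2 w3 h * lam := by
    have := ah_pos hw1 hS hh.ne'
    positivity
  have hXY := sq_div_two_mul_ah_mul_lt_mul_bh hw1.le hw2 hS hh.ne' hlam2
  have hY := mul_bh_lt_two hw1.le hw2.le hw3 h
  refine (Q w1 w2 w3 h lam).spectralRadius_map_ofReal_lt_one ?_ ?_ ?_ <;>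
    simp only [Q_trace, Q_det] <;> linarith
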